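/- arXiv:1907.06086 — 4 statements merged into one kernel-verified Lean document; each statement's English description precedes it below -/
import Mathlib

section
/- Let R be a ring, δ a derivation on R, and S = R[x; δ] the skew polynomial ring of derivation type (so x·r = r·x + δ(r) for r ∈ R). Let δ₁ be another derivation of R. Then δ₁ extends to a derivation of S with δ₁(x) = 0 (acting coefficientwise) if and only if δ₁ ∘ δ = δ ∘ δ₁. -/
/-!
Both sides of the Leibniz rule are additive in each argument, and the set of `b` for which
`D (a * b) = D a * b + a * D b` holds for all `a` is closed under products. Since `S` is
spanned by the `ι r * X ^ i`, it suffices to check the rule at the generators `X` and `ι r`.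
At `X` it holds because `D` commutes with right multiplication by `X` and kills `X`. At `ι r`
one inducts along `a ↦ a * X`: moving `X` past `ι r` via `X * ι r = ι r * X + ι (δ r)`
produces the term `ι (δ₁ (δ r))` on one side and `ι (δ (δ₁ r))` on the other, so the step goes
through exactly when `δ₁ ∘ δ = δ ∘ δ₁`. Evaluating both sides on `X * ι r` shows conversely
that this commutation is forced.
-/

def IsLeibnizAt {S : Type*} [Mul S] [Add S] (D : S → S) (b : S) : Prop :=
  ∀ a, D (a * b) = D a * b + a * D b

section Leibniz

variable {S : Type*} [Ring S] {D : S → S} {b c : S}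

theorem IsLeibnizAt.mul (hb : IsLeibnizAt D b) (hc : IsLeibnizAt D c) :
    IsLeibnizAt D (b * c) := fun a => by
  rw [← mul_assoc, hc, hb, hc]
  noncomm_ring

theorem IsLeibnizAt.add (hDadd : ∀ a b, D (a + b) = D a + D b) (hb : IsLeibnizAt D b)
    (hc : IsLeibnizAt D c) : IsLeibnizAt D (b + c) := fun a => by
  rw [mul_add, hDadd, hDadd, hb, hc]
  noncomm_ring

end Leibniz

section SkewPolynomial

variable {R S : Type*} [Ring R] [Ring S] {ι : R →+* S} {X : S} {δ δ₁ : R → R} {D : S → S}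

theorem induction_monomial (hspan : ∀ s : S, ∃ c : ℕ →₀ R, s = c.sum fun i r => ι r * X ^ i)
    {P : S → Prop} (monomial : ∀ (r : R) (i : ℕ), P (ι r * X ^ i))
    (add : ∀ a b, P a → P b → P (a + b)) (s : S) : P s := by
  obtain ⟨c, rfl⟩ := hspan s
  refine Finset.sum_induction _ P add ?_ fun i _ => monomial _ _
  simpa using monomial 0 0

theorem induction_mul_X (hspan : ∀ s : S, ∃ c : ℕ →₀ R, s = c.sum fun i r => ι r * X ^ i)
    {P : S → Prop} (of : ∀ r, P (ι r)) (mul_X : ∀ a, P a → P (a * X))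
    (add : ∀ a b, P a → P b → P (a + b)) (s : S) : P s := by
  refine induction_monomial hspan (fun r i => ?_) add s
  induction i with
  | zero => simpa using of r
  | succ i ih => simpa [pow_succ, mul_assoc] using mul_X _ ih

theorem map_monomial_of_coeffwise (hδ₁zero : δ₁ 0 = 0)
    (hD : ∀ c : ℕ →₀ R,
      D (c.sum fun i r => ι r * X ^ i) = c.sum fun i r => ι (δ₁ r) * X ^ i)
    (r : R) (i : ℕ) : D (ι r * X ^ i) = ι (δ₁ r) * X ^ i := by
  simpa [hδ₁zero] using hD (Finsupp.single i r)

theorem map_add_of_coeffwise (hδ₁add : ∀ a b : R, δ₁ (a + b) = δ₁ a + δ₁ b)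
    (hspan : ∀ s : S, ∃ c : ℕ →₀ R, s = c.sum fun i r => ι r * X ^ i)
    (hD : ∀ c : ℕ →₀ R,
      D (c.sum fun i r => ι r * X ^ i) = c.sum fun i r => ι (δ₁ r) * X ^ i)
    (a b : S) : D (a + b) = D a + D b := by
  have hδ₁zero : δ₁ 0 = 0 := (AddMonoidHom.mk' δ₁ hδ₁add).map_zero
  obtain ⟨c, rfl⟩ := hspan a
  obtain ⟨d, rfl⟩ := hspan b
  rw [← Finsupp.sum_add_index' (by simp) (by simp [add_mul]), hD, hD, hD,
    Finsupp.sum_add_index' (by simp [hδ₁zero]) (by simp [hδ₁add, add_mul])]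

theorem map_mul_X_of_coeffwise (hspan : ∀ s : S, ∃ c : ℕ →₀ R, s = c.sum fun i r => ι r * X ^ i)
    (hDadd : ∀ a b, D (a + b) = D a + D b)
    (hDmonomial : ∀ (r : R) (i : ℕ), D (ι r * X ^ i) = ι (δ₁ r) * X ^ i) (a : S) :
    D (a * X) = D a * X :=
  induction_monomial hspan (P := fun a => D (a * X) = D a * X)
    (fun r i => by rw [mul_assoc, ← pow_succ, hDmonomial, hDmonomial, pow_succ, mul_assoc])
    (fun a b ha hb => by rw [add_mul, hDadd, hDadd, ha, hb, add_mul]) a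

theorem isLeibnizAt_X (hDmulX : ∀ a, D (a * X) = D a * X) (hDX : D X = 0) :
    IsLeibnizAt D X := fun a => by
  rw [hDmulX, hDX, mul_zero, add_zero]

theorem isLeibnizAt_of_commute (hspan : ∀ s : S, ∃ c : ℕ →₀ R, s = c.sum fun i r => ι r * X ^ i)
    (hcomm : ∀ r : R, X * ι r = ι r * X + ι (δ r))
    (hδ₁mul : ∀ a b : R, δ₁ (a * b) = a * δ₁ b + δ₁ a * b)
    (hDadd : ∀ a b, D (a + b) = D a + D b) (hDι : ∀ r, D (ι r) = ι (δ₁ r))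
    (hDmulX : ∀ a, D (a * X) = D a * X) (hDX : D X = 0)
    (hδ₁δ : ∀ r, δ₁ (δ r) = δ (δ₁ r)) (b : S) : IsLeibnizAt D b := by
  have hι : ∀ r, IsLeibnizAt D (ι r) := by
    suffices ∀ a r, D (a * ι r) = D a * ι r + a * ι (δ₁ r) from
      fun r a => by rw [this, hDι]
    refine induction_mul_X hspan (fun t r => ?_) (fun a ha r => ?_) (fun a b ha hb r => ?_)
    · rw [← map_mul, hDι, hDι, hδ₁mul, map_add, map_mul, map_mul, add_comm]
    · calc D (a * X * ι r) = D (a * ι r * X + a * ι (δ r)) := by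
              rw [mul_assoc, hcomm, mul_add, ← mul_assoc]
        _ = (D a * ι r + a * ι (δ₁ r)) * X + (D a * ι (δ r) + a * ι (δ₁ (δ r))) := by
              rw [hDadd, hDmulX, ha, ha]
        _ = D a * (X * ι r) + a * (X * ι (δ₁ r)) := by
              rw [hcomm, hcomm, hδ₁δ]
              noncomm_ring
        _ = D (a * X) * ι r + a * X * ι (δ₁ r) := by
              rw [hDmulX, mul_assoc, mul_assoc]
    · rw [add_mul, hDadd, hDadd, ha, hb]
      noncomm_ring
  exact induction_mul_X hspan hι (fun a ha => ha.mul (isLeibnizAt_X hDmulX hDX))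
    (fun a b ha hb => ha.add hDadd hb) b

theorem commute_of_isLeibnizAt (hcomm : ∀ r : R, X * ι r = ι r * X + ι (δ r))
    (hDadd : ∀ a b, D (a + b) = D a + D b) (hDι : ∀ r, D (ι r) = ι (δ₁ r)) (hDX : D X = 0)
    (hleibniz : ∀ a b : S, D (a * b) = D a * b + a * D b) (r : R) :
    ι (δ₁ (δ r)) = ι (δ (δ₁ r)) := by
  have hDιX : D (ι r * X) = ι (δ₁ r) * X := by rw [hleibniz, hDX, mul_zero, add_zero, hDι]
  have h := hleibniz X (ι r)
  rw [hcomm, hDadd, hDιX, hDι, hDX, zero_mul, zero_add, hDι, hcomm] at h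
  exact add_left_cancel h

end SkewPolynomial

theorem extend_derivation_iff_commutes_general {R S : Type*} [Ring R] [Ring S]
    (δ δ₁ : R → R)
    (hδ₁add : ∀ a b : R, δ₁ (a + b) = δ₁ a + δ₁ b)
    (hδ₁mul : ∀ a b : R, δ₁ (a * b) = a * δ₁ b + δ₁ a * b)
    (ι : R →+* S) (hι : Function.Injective ι) (X : S)
    (hcomm : ∀ r : R, X * ι r = ι r * X + ι (δ r))
    (hrepr : ∀ s : S, ∃! c : ℕ →₀ R, s = c.sum fun i r => ι r * X ^ i)
    (D : S → S)
    (hD : ∀ c : ℕ →₀ R,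
      D (c.sum fun i r => ι r * X ^ i) = c.sum fun i r => ι (δ₁ r) * X ^ i) :
    (∀ a b : S, D (a * b) = D a * b + a * D b) ↔ (∀ r : R, δ₁ (δ r) = δ (δ₁ r)) := by
  have hspan : ∀ s, ∃ c : ℕ →₀ R, s = c.sum fun i r => ι r * X ^ i := fun s => (hrepr s).exists
  have hδ₁one : δ₁ 1 = 0 := by simpa using hδ₁mul 1 1
  have hDmonomial := map_monomial_of_coeffwise (AddMonoidHom.mk' δ₁ hδ₁add).map_zero hD
  have hDι : ∀ r, D (ι r) = ι (δ₁ r) := fun r => by simpa using hDmonomial r 0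
  have hDX : D X = 0 := by simpa [hδ₁one] using hDmonomial 1 1
  have hDadd := map_add_of_coeffwise hδ₁add hspan hD
  constructor
  · exact fun hleibniz r => hι (commute_of_isLeibnizAt hcomm hDadd hDι hDX hleibniz r)
  · exact fun hδ₁δ a b => isLeibnizAt_of_commute hspan hcomm hδ₁mul hDadd hDι
      (map_mul_X_of_coeffwise hspan hDadd hDmonomial) hDX hδ₁δ b a

/-- Grzeszczuk's lemma: in the skew polynomial ring `S = R[x; δ]` of derivation
type (modelled by a ring `S`, an injective ring hom `ι : R →+* S` and an element
`X` with `X * ι r = ι r * X + ι (δ r)`, in which every element has a unique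
representation `∑ ι rᵢ * Xⁱ`), the coefficientwise extension `D` of a derivation
`δ₁` of `R` with `D X = 0` is a derivation of `S` if and only if `δ₁` commutes
with `δ`. -/
theorem extend_derivation_iff_commutes {R S : Type*} [Ring R] [Ring S]
    (δ δ₁ : R → R)
    (hδadd : ∀ a b : R, δ (a + b) = δ a + δ b)
    (hδmul : ∀ a b : R, δ (a * b) = a * δ b + δ a * b)
    (hδ₁add : ∀ a b : R, δ₁ (a + b) = δ₁ a + δ₁ b)
    (hδ₁mul : ∀ a b : R, δ₁ (a * b) = a * δ₁ b + δ₁ a * b)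
    (ι : R →+* S) (hι : Function.Injective ι) (X : S)
    (hcomm : ∀ r : R, X * ι r = ι r * X + ι (δ r))
    (hrepr : ∀ s : S, ∃! c : ℕ →₀ R, s = c.sum fun i r => ι r * X ^ i)
    (D : S → S)
    (hD : ∀ c : ℕ →₀ R,
      D (c.sum fun i r => ι r * X ^ i) = c.sum fun i r => ι (δ₁ r) * X ^ i) :
    (∀ a b : S, D (a * b) = D a * b + a * D b) ↔ (∀ r : R, δ₁ (δ r) = δ (δ₁ r)) :=
  extend_derivation_iff_commutes_general δ δ₁ hδ₁add hδ₁mul ι hι X hcomm hrepr D hD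
end

section
/- Let F_q be a finite field, θ an automorphism of F_q, δ a θ-derivation, R = F_q[x; θ, δ], and f = xⁿ - f_{n-1}x^{n-1} - ⋯ - f₁x - f₀ with f₀ ≠ 0. Let β = θ⁻¹(f₀⁻¹)x^{n-1} - θ⁻¹(f₀⁻¹f_{n-1})x^{n-2} - ⋯ - θ⁻¹(f₀⁻¹f₂)x - θ⁻¹(f₀⁻¹f₁), where δ acts on a polynomial coefficientwise. Then x·β ≡ 1 + δ(β) (mod Rf). -/
/-- In `R/Rf` for `R = F_q[x; θ, δ]` and `f = xⁿ - f_{n-1}x^{n-1} - ⋯ - f₀` with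
`f₀ ≠ 0`, the element `β = θ⁻¹(f₀⁻¹)x^{n-1} - θ⁻¹(f₀⁻¹f_{n-1})x^{n-2} - ⋯ -
θ⁻¹(f₀⁻¹f₁)` satisfies `x · β ≡ 1 + δ(β) (mod Rf)`, where `δ` acts on a
polynomial coefficientwise. -/
theorem x_mul_beta_mod_f {F S : Type*} [Field F] [Fintype F] [Ring S]
    (θ : F ≃+* F) (δ : F → F)
    (hδadd : ∀ a b : F, δ (a + b) = δ a + δ b)
    (hδmul : ∀ a b : F, δ (a * b) = θ a * δ b + δ a * b)
    (ι : F →+* S) (hι : Function.Injective ι) (X : S)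
    (hcomm : ∀ r : F, X * ι r = ι (θ r) * X + ι (δ r))
    (hrepr : ∀ s : S, ∃! c : ℕ →₀ F, s = c.sum fun i r => ι r * X ^ i)
    (n : ℕ) (hn : 0 < n) (fc : ℕ → F) (hf0 : fc 0 ≠ 0)
    (f : S) (hf : f = X ^ n - ∑ j ∈ Finset.range n, ι (fc j) * X ^ j)
    (β δβ : S)
    (hβ : β = ι (θ.symm (fc 0)⁻¹) * X ^ (n - 1)
        - ∑ j ∈ Finset.Ico 1 n, ι (θ.symm ((fc 0)⁻¹ * fc j)) * X ^ (j - 1))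
    (hδβ : δβ = ι (δ (θ.symm (fc 0)⁻¹)) * X ^ (n - 1)
        - ∑ j ∈ Finset.Ico 1 n, ι (δ (θ.symm ((fc 0)⁻¹ * fc j))) * X ^ (j - 1)) :
    ∃ q : S, X * β - (1 + δβ) = q * f := by
  refine ⟨ι (fc 0)⁻¹, ?_⟩
  have key : ∀ (r : F) (k : ℕ), X * (ι r * X ^ k) = ι (θ r) * X ^ (k + 1) + ι (δ r) * X ^ k := by
    intro r k
    rw [← mul_assoc, hcomm, add_mul, mul_assoc, ← pow_succ']
  subst hβ hδβ hf
  rw [mul_sub, key, Finset.mul_sum]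
  have hsum : ∀ j ∈ Finset.Ico 1 n,
      X * (ι (θ.symm ((fc 0)⁻¹ * fc j)) * X ^ (j - 1))
      = ι ((fc 0)⁻¹ * fc j) * X ^ j + ι (δ (θ.symm ((fc 0)⁻¹ * fc j))) * X ^ (j - 1) := by
    intro j hj
    rw [key, θ.apply_symm_apply, Nat.sub_add_cancel (Finset.mem_Ico.mp hj).1]
  rw [Finset.sum_congr rfl hsum, Finset.sum_add_distrib, θ.apply_symm_apply,
    Nat.sub_add_cancel hn]
  have hrange : Finset.range n = insert 0 (Finset.Ico 1 n) := by
    ext k; simp [Finset.mem_Ico]; omega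
  rw [hrange, Finset.sum_insert (by simp), mul_sub, mul_add, Finset.mul_sum]
  have h0 : ι (fc 0)⁻¹ * (ι (fc 0) * X ^ 0) = 1 := by
    rw [pow_zero, mul_one, ← map_mul, inv_mul_cancel₀ hf0, map_one]
  have hterm : ∀ j ∈ Finset.Ico 1 n,
      ι ((fc 0)⁻¹ * fc j) * X ^ j = ι (fc 0)⁻¹ * (ι (fc j) * X ^ j) := by
    intro j hj; rw [map_mul, mul_assoc]
  rw [Finset.sum_congr rfl hterm, h0]
  abel
end

section
/- Let R be a commutative ring, σ ∈ Aut(R), δ a σ-derivation of R, and M an n×n matrix over R. Define pseudo-linear maps T, T' : Rⁿ → Rⁿ by T(v) = σ(v)·M + δ(v) and T'(v) = σ⁻¹(v)·(Mᵗ)_{σ⁻¹} + δ''(v), where δ'' = -σ⁻¹∘δ, σ and δ act componentwise, and (Mᵗ)_{σ⁻¹} is the transpose of M with σ⁻¹ applied entrywise. If C ⊆ Rⁿ is an R-submodule with T(C) ⊆ C, then the dual code C^⊥ = {b ∈ Rⁿ : b·a = 0 for all a ∈ C} (standard bilinear form) satisfies T'(C^⊥) ⊆ C^⊥. -/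
/-- If `C ⊆ Rⁿ` is an `R`-submodule invariant under the pseudo-linear map
`T(v) = σ(v)·M + δ(v)`, then its dual code is invariant under
`T'(v) = σ⁻¹(v)·(Mᵗ)_{σ⁻¹} + δ''(v)` where `δ'' = -σ⁻¹ ∘ δ`. -/
theorem dual_code_invariant {R : Type*} [CommRing R] {n : ℕ}
    (σ : R ≃+* R) (δ : R → R)
    (hδadd : ∀ a b : R, δ (a + b) = δ a + δ b)
    (hδmul : ∀ a b : R, δ (a * b) = σ a * δ b + δ a * b)
    (M : Matrix (Fin n) (Fin n) R)
    (T T' : (Fin n → R) → (Fin n → R))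
    (hT : ∀ v, T v = Matrix.vecMul (fun i => σ (v i)) M + fun i => δ (v i))
    (hT' : ∀ v, T' v = Matrix.vecMul (fun i => σ.symm (v i)) ((M.transpose).map ⇑σ.symm)
        + fun i => -σ.symm (δ (v i)))
    (C : Submodule R (Fin n → R))
    (hTC : ∀ v ∈ C, T v ∈ C) :
    ∀ b : Fin n → R, (∀ a ∈ C, ∑ i, b i * a i = 0) →
      ∀ a ∈ C, ∑ i, T' b i * a i = 0 := by
  intro b hb a ha
  set D : R →+ R := AddMonoidHom.mk' δ hδadd with hD
  have hDδ : ∀ x, D x = δ x := fun x => rfl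
  -- h1 : b ⬝ T a = 0
  have h1 : ∑ i, b i * T a i = 0 := hb _ (hTC a ha)
  rw [hT] at h1
  simp only [Matrix.vecMul, dotProduct, Pi.add_apply] at h1
  have h1' : (∑ i, ∑ j, b i * (σ (a j) * M j i)) + ∑ i, b i * δ (a i) = 0 := by
    rw [← Finset.sum_add_distrib]
    simpa [mul_add, Finset.mul_sum] using h1
  -- h2 : δ (a ⬝ b) = 0
  have h2 : (∑ i, σ (a i) * δ (b i)) + ∑ i, δ (a i) * b i = 0 := by
    rw [← Finset.sum_add_distrib]
    calc ∑ i, (σ (a i) * δ (b i) + δ (a i) * b i)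
        = ∑ i, D (a i * b i) := by simp [hDδ, hδmul]
      _ = D (∑ i, a i * b i) := (map_sum D _ _).symm
      _ = D 0 := by rw [show ∑ i, a i * b i = 0 from by
            simpa [mul_comm] using hb a ha]
      _ = 0 := D.map_zero
  -- main goal via injectivity of σ
  have hgoal : σ (∑ i, T' b i * a i) = 0 := by
    rw [map_sum]
    have hterm : ∀ i, σ (T' b i * a i)
        = (∑ j, b j * M i j) * σ (a i) - δ (b i) * σ (a i) := by
      intro i
      rw [hT']
      simp only [Matrix.vecMul, dotProduct, Pi.add_apply, Matrix.map_apply,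
        Matrix.transpose_apply]
      rw [map_mul, map_add, map_sum, map_neg]
      simp only [map_mul, RingEquiv.apply_symm_apply]
      ring
    rw [Finset.sum_congr rfl fun i _ => hterm i]
    have hA : ∑ i, ((∑ j, b j * M i j) * σ (a i) - δ (b i) * σ (a i))
        = (∑ i, ∑ j, b j * M i j * σ (a i)) - ∑ i, δ (b i) * σ (a i) := by
      rw [← Finset.sum_sub_distrib]
      exact Finset.sum_congr rfl fun i _ => by rw [Finset.sum_mul]
    rw [hA]
    have hswap : ∑ i, ∑ j, b j * M i j * σ (a i)
        = ∑ i, ∑ j, b i * (σ (a j) * M j i) := by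
      rw [Finset.sum_comm]
      exact Finset.sum_congr rfl fun i _ => Finset.sum_congr rfl fun j _ => by ring
    have hB : ∑ i, δ (b i) * σ (a i) = ∑ i, σ (a i) * δ (b i) :=
      Finset.sum_congr rfl fun i _ => mul_comm _ _
    have hC : ∑ i, b i * δ (a i) = ∑ i, δ (a i) * b i :=
      Finset.sum_congr rfl fun i _ => mul_comm _ _
    rw [hswap, hB]
    linear_combination h1' - h2 - hC
  have := σ.injective (hgoal.trans (map_zero σ).symm)
  simpa using this
end

section
/- Let F be a field with automorphism θ and θ-derivation δ, and let N_i denote the generalized norm defined by N₀(α) = 1 and N_{i+1}(α) = θ(N_i(α))·α + δ(N_i(α)). Then for every α ∈ F and every i ≥ 0 there exists q ∈ F[x; θ, δ] such that, in the skew polynomial ring F[x; θ, δ], xⁱ = q·(x - α) + N_i(α); that is, the remainder of right division of xⁱ by (x - α) equals N_i(α). -/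
/-- The remainder of right division of `xⁱ` by `x - α` in `F[x; θ, δ]` is the
generalized norm `N_i(α)`: for each `i` there is `q` with
`xⁱ = q·(x - α) + N_i(α)`. -/
theorem x_pow_right_div_remainder {F S : Type*} [Field F] [Ring S]
    (θ : F ≃+* F) (δ : F → F)
    (hδadd : ∀ a b : F, δ (a + b) = δ a + δ b)
    (hδmul : ∀ a b : F, δ (a * b) = θ a * δ b + δ a * b)
    (ι : F →+* S) (X : S)
    (hcomm : ∀ r : F, X * ι r = ι (θ r) * X + ι (δ r))
    (N : ℕ → F → F)
    (hN0 : ∀ α : F, N 0 α = 1)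
    (hNsucc : ∀ (i : ℕ) (α : F), N (i + 1) α = θ (N i α) * α + δ (N i α)) :
    ∀ (i : ℕ) (α : F), ∃ q : S, X ^ i = q * (X - ι α) + ι (N i α) := by
  intro i
  induction i with
  | zero => intro α; exact ⟨0, by simp [hN0]⟩
  | succ i ih =>
    intro α
    obtain ⟨q, hq⟩ := ih α
    refine ⟨X * q + ι (θ (N i α)), ?_⟩
    have : X ^ (i + 1) = X * X ^ i := pow_succ' X i
    rw [this, hq, hNsucc]
    rw [mul_add, hcomm]
    rw [map_add, map_mul]
    noncomm_ring
end
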